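/- Let Φ ∈ ℝ^{d×d} be a symmetric matrix with Φ − δ·I positive semidefinite for some δ > 0, and let G : ℝ^d → ℝ^d be α-strongly monotone and L-Lipschitz continuous with respect to the Euclidean norm (α ≥ 0, L ≥ 0). Then for all z, z' ∈ ℝ^d, ‖(z − Φ⁻¹G(z)) − (z' − Φ⁻¹G(z'))‖_Φ² ≤ (1 + L²/δ² − 2α/‖Φ‖) · ‖z − z'‖_Φ², where ‖Φ‖ denotes the operator norm of Φ. -/

import Mathlib

open RealInnerProductSpace

/-- The squared `Φ`-induced norm `‖v‖_Φ² = ⟪v, Φ v⟫`. -/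
noncomputable def phiNormSq {d : ℕ} (Φ : Matrix (Fin d) (Fin d) ℝ)
    (v : EuclideanSpace ℝ (Fin d)) : ℝ :=
  ⟪v, Matrix.toEuclideanCLM (𝕜 := ℝ) Φ v⟫

/-!
With `u = z - z'`, `h = G z - G z'` and `w = Φ⁻¹ h`, the forward step difference is `u - w`, and
since `Φ w = h` expanding the `Φ`-norm gives `‖u - w‖_Φ² = ‖u‖_Φ² - 2⟪h, u⟫ + ⟪w, h⟫`.
Strong monotonicity together with `‖u‖_Φ² ≤ ‖Φ‖ ‖u‖²` bounds `-2⟪h, u⟫` by `-(2α/‖Φ‖) ‖u‖_Φ²`.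
Coercivity `δ ‖w‖² ≤ ⟪w, Φ w⟫ = ⟪w, h⟫` gives `⟪w, h⟫ ≤ ‖h‖² / δ`, which the Lipschitz bound and
`δ ‖u‖² ≤ ‖u‖_Φ²` turn into `(L²/δ²) ‖u‖_Φ²`.
-/

section InnerProductSpace

variable {E : Type*} [NormedAddCommGroup E] [InnerProductSpace ℝ E]

theorem real_inner_le_norm_sq_div_of_mul_norm_sq_le {δ : ℝ} (hδ : 0 < δ) {w h : E}
    (hw : δ * ‖w‖ ^ 2 ≤ ⟪w, h⟫) : ⟪w, h⟫ ≤ ‖h‖ ^ 2 / δ := by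
  rw [le_div_iff₀ hδ]
  nlinarith [real_inner_le_norm w h, sq_nonneg (δ * ‖w‖ - ‖h‖)]

theorem LinearMap.IsSymmetric.inner_sub_map_sub {A : E →ₗ[ℝ] E} (hA : A.IsSymmetric)
    (u w : E) : ⟪u - w, A (u - w)⟫ = ⟪u, A u⟫ - 2 * ⟪A w, u⟫ + ⟪w, A w⟫ := by
  rw [map_sub, inner_sub_left, inner_sub_right, inner_sub_right, ← hA w u,
    real_inner_comm u (A w)]
  ring

theorem ContinuousLinearMap.real_inner_map_self_div_opNorm_le (A : E →L[ℝ] E) (u : E) :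
    ⟪u, A u⟫ / ‖A‖ ≤ ‖u‖ ^ 2 :=
  div_le_of_le_mul₀ (norm_nonneg A) (sq_nonneg ‖u‖) <|
    calc ⟪u, A u⟫ ≤ ‖u‖ * ‖A u‖ := real_inner_le_norm u (A u)
      _ ≤ ‖u‖ * (‖A‖ * ‖u‖) := by gcongr; exact A.le_opNorm u
      _ = ‖u‖ ^ 2 * ‖A‖ := by ring

theorem ContinuousLinearMap.inner_sub_map_sub_le_of_coercive {A : E →L[ℝ] E}
    (hA : (A : E →ₗ[ℝ] E).IsSymmetric) {δ : ℝ} (hδ : 0 < δ)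
    (hcoer : ∀ v, δ * ‖v‖ ^ 2 ≤ ⟪v, A v⟫) {α L : ℝ} (hα : 0 ≤ α) {u w : E}
    (hmono : α * ‖u‖ ^ 2 ≤ ⟪A w, u⟫) (hlip : ‖A w‖ ≤ L * ‖u‖) :
    ⟪u - w, A (u - w)⟫ ≤ (1 + L ^ 2 / δ ^ 2 - 2 * α / ‖A‖) * ⟪u, A u⟫ := by
  have hw_le : ⟪w, A w⟫ ≤ ‖A w‖ ^ 2 / δ :=
    real_inner_le_norm_sq_div_of_mul_norm_sq_le hδ (hcoer w)
  have hw_bound : ‖A w‖ ^ 2 / δ ≤ L ^ 2 / δ ^ 2 * ⟪u, A u⟫ := by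
    calc ‖A w‖ ^ 2 / δ ≤ (L * ‖u‖) ^ 2 / δ := by gcongr
      _ = L ^ 2 / δ ^ 2 * (δ * ‖u‖ ^ 2) := by field_simp
      _ ≤ L ^ 2 / δ ^ 2 * ⟪u, A u⟫ := by gcongr; exact hcoer u
  have hcross : 2 * α / ‖A‖ * ⟪u, A u⟫ ≤ 2 * ⟪A w, u⟫ := by
    calc 2 * α / ‖A‖ * ⟪u, A u⟫ = 2 * α * (⟪u, A u⟫ / ‖A‖) := by ring
      _ ≤ 2 * α * ‖u‖ ^ 2 := by gcongr; exact A.real_inner_map_self_div_opNorm_le u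
      _ ≤ 2 * ⟪A w, u⟫ := by linarith
  have hexpand : ⟪u - w, A (u - w)⟫ = ⟪u, A u⟫ - 2 * ⟪A w, u⟫ + ⟪w, A w⟫ :=
    hA.inner_sub_map_sub u w
  linarith

end InnerProductSpace

namespace Matrix

variable {n : Type*} [Fintype n] [DecidableEq n]

theorem PosSemidef.mul_norm_sq_le_inner_toEuclideanCLM {Φ : Matrix n n ℝ} {δ : ℝ}
    (h : (Φ - δ • (1 : Matrix n n ℝ)).PosSemidef) (v : EuclideanSpace ℝ n) :
    δ * ‖v‖ ^ 2 ≤ ⟪v, toEuclideanCLM (𝕜 := ℝ) Φ v⟫ := by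
  have hnonneg := h.dotProduct_mulVec_nonneg v.ofLp
  rw [star_trivial, ← inner_toEuclideanCLM, map_sub, map_smul, map_one,
    _root_.sub_apply, _root_.smul_apply, one_apply_eq_self,
    inner_sub_right, inner_smul_right, real_inner_self_eq_norm_sq] at hnonneg
  linarith

theorem PosDef.toEuclideanCLM_apply_inv_apply {Φ : Matrix n n ℝ} (hΦ : Φ.PosDef)
    (v : EuclideanSpace ℝ n) :
    toEuclideanCLM (𝕜 := ℝ) Φ (toEuclideanCLM (𝕜 := ℝ) Φ⁻¹ v) = v := by
  rw [← mul_apply_eq_comp, ← map_mul,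
    mul_nonsing_inv _ ((isUnit_iff_isUnit_det _).mp hΦ.isUnit), map_one, one_apply_eq_self]

end Matrix

theorem forward_step_squared_norm_bound_general {d : ℕ}
    (Φ : Matrix (Fin d) (Fin d) ℝ)
    (δ : ℝ) (hδ : 0 < δ) (hΦδ : (Φ - δ • (1 : Matrix (Fin d) (Fin d) ℝ)).PosSemidef)
    (G : EuclideanSpace ℝ (Fin d) → EuclideanSpace ℝ (Fin d))
    (α L : ℝ) (hα : 0 ≤ α)
    (hGmono : ∀ x y, α * ‖x - y‖ ^ 2 ≤ ⟪G x - G y, x - y⟫)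
    (hGlip : ∀ x y, ‖G x - G y‖ ≤ L * ‖x - y‖) :
    ∀ z z' : EuclideanSpace ℝ (Fin d),
      phiNormSq Φ ((z - Matrix.toEuclideanCLM (𝕜 := ℝ) Φ⁻¹ (G z)) -
          (z' - Matrix.toEuclideanCLM (𝕜 := ℝ) Φ⁻¹ (G z'))) ≤
        (1 + L ^ 2 / δ ^ 2 - 2 * α / ‖Matrix.toEuclideanCLM (𝕜 := ℝ) Φ‖) *
          phiNormSq Φ (z - z') := by
  intro z z'
  have hΦ : Φ.PosDef := by
    simpa using Matrix.PosDef.posSemidef_add hΦδ (Matrix.PosDef.one.smul hδ)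
  have hsymm : (Matrix.toEuclideanCLM (𝕜 := ℝ) Φ :
      EuclideanSpace ℝ (Fin d) →ₗ[ℝ] EuclideanSpace ℝ (Fin d)).IsSymmetric := by
    rw [Matrix.coe_toEuclideanCLM_eq_toEuclideanLin, Matrix.isSymmetric_toEuclideanLin_iff]
    exact hΦ.isHermitian
  have hstep : (z - Matrix.toEuclideanCLM (𝕜 := ℝ) Φ⁻¹ (G z)) -
      (z' - Matrix.toEuclideanCLM (𝕜 := ℝ) Φ⁻¹ (G z')) =
      (z - z') - Matrix.toEuclideanCLM (𝕜 := ℝ) Φ⁻¹ (G z - G z') := by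
    rw [map_sub]; abel
  have hG := hΦ.toEuclideanCLM_apply_inv_apply (G z - G z')
  have hmono := hGmono z z'
  have hlip := hGlip z z'
  rw [← hG] at hmono hlip
  rw [phiNormSq, phiNormSq, hstep]
  exact ContinuousLinearMap.inner_sub_map_sub_le_of_coercive hsymm hδ
    hΦδ.mul_norm_sq_le_inner_toEuclideanCLM hα hmono hlip

/-- Squared-norm expansion inequality for the forward step `z ↦ z − Φ⁻¹ G(z)`
established in the proof of Lemma 3. -/
theorem forward_step_squared_norm_bound {d : ℕ}
    (Φ : Matrix (Fin d) (Fin d) ℝ) (hΦsymm : Φ.IsSymm)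
    (δ : ℝ) (hδ : 0 < δ) (hΦδ : (Φ - δ • (1 : Matrix (Fin d) (Fin d) ℝ)).PosSemidef)
    (G : EuclideanSpace ℝ (Fin d) → EuclideanSpace ℝ (Fin d))
    (α L : ℝ) (hα : 0 ≤ α) (hL : 0 ≤ L)
    (hGmono : ∀ x y, α * ‖x - y‖ ^ 2 ≤ ⟪G x - G y, x - y⟫)
    (hGlip : ∀ x y, ‖G x - G y‖ ≤ L * ‖x - y‖) :
    ∀ z z' : EuclideanSpace ℝ (Fin d),
      phiNormSq Φ ((z - Matrix.toEuclideanCLM (𝕜 := ℝ) Φ⁻¹ (G z)) -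
          (z' - Matrix.toEuclideanCLM (𝕜 := ℝ) Φ⁻¹ (G z'))) ≤
        (1 + L ^ 2 / δ ^ 2 - 2 * α / ‖Matrix.toEuclideanCLM (𝕜 := ℝ) Φ‖) *
          phiNormSq Φ (z - z') :=
  forward_step_squared_norm_bound_general Φ δ hδ hΦδ G α L hα hGmono hGlip
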